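/- Let c be a point of the plane and let C be a septa-hexagon centered at c: C is the union of seven regular hexagons of side length 1/2, all with orientation 0 (vertices at angles kπ/3 from their centers), one centered at c and the other six centered at the points c + (√3/2)·(cos(π/6 + jπ/3), sin(π/6 + jπ/3)) for j = 0,…,5. Then for every finite set S of points in the plane there exists a subset S' ⊆ S ∩ C with |S'| ≤ 7 such that every point p ∈ S ∩ C satisfies dist(p, q) ≤ 1 for some q ∈ S'. -/

import Mathlib

/-- The Euclidean plane. -/
abbrev Plane : Type := EuclideanSpace ℝ (Fin 2)

/-- A point of the plane with given coordinates. -/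
noncomputable def pt (x y : ℝ) : Plane := (EuclideanSpace.equiv (Fin 2) ℝ).symm ![x, y]

/-- The `k`-th vertex of the regular hexagon of side length `1/2` with center `c`
and orientation `φ`. -/
noncomputable def hexVertex (c : Plane) (φ : ℝ) (k : Fin 6) : Plane :=
  c + (1 / 2 : ℝ) • pt (Real.cos (φ + k * Real.pi / 3)) (Real.sin (φ + k * Real.pi / 3))

/-- The regular hexagon of side length `1/2` with center `c` and orientation `φ`:
the convex hull of its six vertices. -/
noncomputable def hexagon (c : Plane) (φ : ℝ) : Set Plane :=
  convexHull ℝ (Set.range (hexVertex c φ))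

/-- The septa-hexagon centered at `c`: the union of the regular hexagon of side length `1/2`
centered at `c` (orientation `0`) and its six edge-adjacent congruent hexagons, whose centers
are at distance `√3/2` from `c` at angles `π/6 + jπ/3`, `j = 0, …, 5`. -/
noncomputable def septaHexagon (c : Plane) : Set Plane :=
  hexagon c 0 ∪
    ⋃ j : Fin 6,
      hexagon
        (c + (Real.sqrt 3 / 2) •
          pt (Real.cos (Real.pi / 6 + j * Real.pi / 3))
             (Real.sin (Real.pi / 6 + j * Real.pi / 3))) 0

/-!
Each of the seven hexagons lies in the closed disk of radius `1/2` about its center, so any two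
of its points are at distance at most `1`. Choosing one point of `S` in each hexagon that meets
`S` therefore gives at most seven points dominating `S ∩ C`.
-/

open Metric

theorem Finset.exists_subset_dominating_of_iUnion {α ι : Type*} [PseudoMetricSpace α] [Fintype ι]
    {r : ℝ} (U : ι → Set α) (hU : ∀ i, ∀ p ∈ U i, ∀ q ∈ U i, dist p q ≤ r) (S : Finset α) :
    ∃ S' : Finset α, S' ⊆ S ∧ (↑S' : Set α) ⊆ ⋃ i, U i ∧ S'.card ≤ Fintype.card ι ∧
      ∀ p ∈ S, p ∈ ⋃ i, U i → ∃ q ∈ S', dist p q ≤ r := by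
  classical
  choose f hfS hfU using fun i : {i // ∃ p ∈ S, p ∈ U i} => i.2
  refine ⟨Finset.univ.image f, ?_, ?_, ?_, ?_⟩
  · intro q hq
    obtain ⟨i, -, rfl⟩ := Finset.mem_image.mp hq
    exact hfS i
  · intro q hq
    obtain ⟨i, -, rfl⟩ := Finset.mem_image.mp hq
    exact Set.mem_iUnion_of_mem _ (hfU i)
  · exact Finset.card_image_le.trans (Fintype.card_subtype_le _)
  · intro p hp hpU
    obtain ⟨i, hi⟩ := Set.mem_iUnion.mp hpU
    let j : {i // ∃ p ∈ S, p ∈ U i} := ⟨i, p, hp, hi⟩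
    exact ⟨f j, Finset.mem_image_of_mem _ (Finset.mem_univ j), hU i p hi _ (hfU j)⟩

lemma norm_pt (x y : ℝ) : ‖pt x y‖ = √(x ^ 2 + y ^ 2) := by
  simp [EuclideanSpace.norm_eq, pt, Fin.sum_univ_two, sq_abs]

lemma hexagon_subset_closedBall (c : Plane) (φ : ℝ) : hexagon c φ ⊆ closedBall c (1 / 2) := by
  refine convexHull_min ?_ (convex_closedBall _ _)
  rintro _ ⟨k, rfl⟩
  simp [hexVertex, dist_eq_norm, norm_smul, norm_pt]

lemma dist_le_one_of_mem_hexagon {c p q : Plane} {φ : ℝ} (hp : p ∈ hexagon c φ)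
    (hq : q ∈ hexagon c φ) : dist p q ≤ 1 :=
  calc dist p q ≤ dist p c + dist q c := dist_triangle_right _ _ _
    _ ≤ 1 / 2 + 1 / 2 :=
      add_le_add (hexagon_subset_closedBall c φ hp) (hexagon_subset_closedBall c φ hq)
    _ = 1 := by norm_num

/-- `none` indexes the central hexagon, `some j` the `j`-th adjacent one. -/
noncomputable def septaHexagonCenter (c : Plane) : Option (Fin 6) → Plane :=
  fun o => o.elim c fun j => c + (√3 / 2) •
    pt (Real.cos (Real.pi / 6 + j * Real.pi / 3)) (Real.sin (Real.pi / 6 + j * Real.pi / 3))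

lemma septaHexagon_eq_iUnion (c : Plane) :
    septaHexagon c = ⋃ o, hexagon (septaHexagonCenter c o) 0 := by
  rw [Set.iUnion_option]; rfl

/-- For a septa-hexagon `C` and any finite point set `S`, there is a subset
`S' ⊆ S ∩ C` with `|S'| ≤ 7` dominating every point of `S ∩ C`. -/
theorem septaHexagon_dominating_set (c : Plane) (S : Finset Plane) :
    ∃ S' : Finset Plane, S' ⊆ S ∧ (↑S' : Set Plane) ⊆ septaHexagon c ∧ S'.card ≤ 7 ∧
      ∀ p ∈ S, p ∈ septaHexagon c → ∃ q ∈ S', dist p q ≤ 1 := by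
  rw [septaHexagon_eq_iUnion]
  obtain ⟨S', hS, hC, hcard, hdom⟩ := Finset.exists_subset_dominating_of_iUnion
    (fun o => hexagon (septaHexagonCenter c o) 0)
    (fun _ _ hp _ hq => dist_le_one_of_mem_hexagon hp hq) S
  exact ⟨S', hS, hC, hcard.trans_eq (by simp), hdom⟩
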